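/- arXiv:2605.21170 — 2 statements merged into one kernel-verified Lean document; each statement's English description precedes it below -/
import Mathlib

section
/- Weak separability does not imply separability for infinite classes: Let τ = {P} with P unary and consider first-order logic. For n ≥ 1 let 𝔄_n be the model with domain ℕ in which P is interpreted by a set of exactly n elements. Then the classes A = {𝔄_n | n odd} and B = {𝔄_n | n even} are weakly separable in first-order logic (each 𝔄_m, 𝔄_n with m ≠ n are separated by the sentence 'there exist exactly m elements satisfying P'), but they are not separable: no single first-order sentence is true in all 𝔄_n with n odd and false in all 𝔄_n with n even. -/
/-- Formulas of FO(Q): first-order logic over a relational vocabulary `R` (with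
arities `ar`) whose quantifiers are the symbols of `QS` (width 1, type 1). -/
inductive Fml (R : Type) (ar : R → ℕ) (QS : Type) : Type where
  | eq : ℕ → ℕ → Fml R ar QS
  | rel : (r : R) → (Fin (ar r) → ℕ) → Fml R ar QS
  | not : Fml R ar QS → Fml R ar QS
  | and : Fml R ar QS → Fml R ar QS → Fml R ar QS
  | qu : QS → ℕ → Fml R ar QS → Fml R ar QS

namespace Fml

variable {R QS : Type} {ar : R → ℕ}

/-- Satisfaction: `Qint` interprets each quantifier symbol as a generalized
quantifier (a class of structures `(D, P)` with `P ⊆ D`). -/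
def Sat (Qint : QS → (D : Type) → Set D → Prop) {A : Type}
    (I : (r : R) → (Fin (ar r) → A) → Prop) :
    (ℕ → A) → Fml R ar QS → Prop
  | f, .eq i j => f i = f j
  | f, .rel r v => I r fun k => f (v k)
  | f, .not φ => ¬ Sat Qint I f φ
  | f, .and φ ψ => Sat Qint I f φ ∧ Sat Qint I f ψ
  | f, .qu q x φ => Qint q A {a | Sat Qint I (Function.update f x a) φ}

/-- Quantifier depth. -/
def depth : Fml R ar QS → ℕ
  | .eq _ _ => 0
  | .rel _ _ => 0
  | .not φ => depth φ
  | .and φ ψ => max (depth φ) (depth ψ)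
  | .qu _ _ φ => depth φ + 1

/-- Formula size. -/
def size : Fml R ar QS → ℕ
  | .eq _ _ => 1
  | .rel _ _ => 1
  | .not φ => size φ + 1
  | .and φ ψ => size φ + size ψ
  | .qu _ _ φ => size φ + 1

/-- Free variables. -/
def freeVars : Fml R ar QS → Finset ℕ
  | .eq i j => {i, j}
  | .rel _ v => Finset.image v Finset.univ
  | .not φ => freeVars φ
  | .and φ ψ => freeVars φ ∪ freeVars ψ
  | .qu _ x φ => freeVars φ \ {x}

/-- Atomic formulas. -/
def Atomic : Fml R ar QS → Prop
  | .eq _ _ => True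
  | .rel _ _ => True
  | _ => False

/-- Quantifier-free formulas (Boolean combinations of atomic formulas). -/
def QFree : Fml R ar QS → Prop
  | .eq _ _ => True
  | .rel _ _ => True
  | .not φ => QFree φ
  | .and φ ψ => QFree φ ∧ QFree ψ
  | .qu _ _ _ => False

end Fml

/-- The standard first-order quantifiers: `true ↦ ∃`, `false ↦ ∀`. -/
def FOQuant : Bool → (D : Type) → Set D → Prop
  | true, _, X => X.Nonempty
  | false, _, X => X = Set.univ

/-!
Over the vocabulary `{P}` an Ehrenfeucht–Fraïssé argument works on variable assignments: a
correspondence between the values of finitely many variables that respects equality and `P`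
extends to one more variable as long as `P` and its complement each have more elements than
the variables already in play, on both sides. So two structures in which `P` and `¬P` both
have at least `d` elements satisfy the same sentences of quantifier depth `d`; in particular
`𝔄_{2d+1}` and `𝔄_{2d+2}` do, and no sentence separates odd from even. Weak separability is
witnessed by the sentence "exactly `m` elements satisfy `P`".
-/

theorem Nat.Iio_add_one_eq_insert (n : ℕ) : Set.Iio (n + 1) = insert n (Set.Iio n) :=
  Order.Iio_succ_eq_insert n

theorem Finset.exists_mem_forall_ne_of_card_lt_encard {ι β : Type*} {Q : Set β} (S : Finset ι)
    (f : ι → β) (hS : (S.card : ℕ∞) < Q.encard) : ∃ b ∈ Q, ∀ j ∈ S, f j ≠ b := by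
  by_contra! hQ
  have hsub : Q ⊆ f '' S := fun b hb => by
    obtain ⟨j, hj, rfl⟩ := hQ b hb
    exact ⟨j, hj, rfl⟩
  have := (Set.encard_le_encard hsub).trans (Set.encard_image_le f _)
  rw [Set.encard_coe_eq_coe_finsetCard] at this
  exact hS.not_ge this

theorem Set.exists_mem_le_encard_sdiff_singleton_iff {α : Type*} {s : Set α} {k : ℕ∞} :
    (∃ a ∈ s, k ≤ (s \ {a}).encard) ↔ k + 1 ≤ s.encard := by
  constructor
  · rintro ⟨a, ha, hk⟩
    rw [← Set.encard_sdiff_singleton_add_one ha]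
    gcongr
  · intro hk
    obtain ⟨a, ha⟩ : s.Nonempty :=
      Set.nonempty_of_encard_ne_zero (ne_bot_of_le_ne_bot one_ne_zero (le_add_self.trans hk))
    rw [← Set.encard_sdiff_singleton_add_one ha, ENat.add_le_add_iff_right ENat.one_ne_top] at hk
    exact ⟨a, ha, hk⟩

namespace MonadicFO

open Fml Function

abbrev MFml := Fml Unit (fun _ => 1) Bool

abbrev Holds {α : Type} (P : Set α) (f : ℕ → α) (φ : MFml) : Prop :=
  Sat FOQuant (fun _ v => v 0 ∈ P) f φ

theorem foQuant_congr {α β : Type} {X : Set α} {Y : Set β} (forth : ∀ a, ∃ b, (a ∈ X ↔ b ∈ Y))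
    (back : ∀ b, ∃ a, (a ∈ X ↔ b ∈ Y)) (q : Bool) : FOQuant q α X ↔ FOQuant q β Y := by
  cases q
  · simp only [FOQuant, Set.eq_univ_iff_forall]
    exact ⟨fun hX b => (back b).elim fun a h => h.mp (hX a),
      fun hY a => (forth a).elim fun b h => h.mpr (hY b)⟩
  · exact ⟨fun ⟨a, ha⟩ => (forth a).elim fun b h => ⟨b, h.mp ha⟩,
      fun ⟨b, hb⟩ => (back b).elim fun a h => ⟨a, h.mpr hb⟩⟩

section EhrenfeuchtFraisse

variable {α β : Type} {P : Set α} {P' : Set β}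

def BothSidesAtLeast (P : Set α) (n : ℕ) : Prop :=
  (n : ℕ∞) ≤ P.encard ∧ (n : ℕ∞) ≤ Pᶜ.encard

theorem BothSidesAtLeast.mono {m n : ℕ} (h : BothSidesAtLeast P n) (hmn : m ≤ n) :
    BothSidesAtLeast P m :=
  ⟨le_trans (by exact_mod_cast hmn) h.1, le_trans (by exact_mod_cast hmn) h.2⟩

theorem bothSidesAtLeast_of_finite [Infinite α] (hP : P.Finite) {n : ℕ} (hn : n ≤ P.ncard) :
    BothSidesAtLeast P n :=
  ⟨hP.cast_ncard_eq ▸ by exact_mod_cast hn, by simp [hP.infinite_compl.encard_eq]⟩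

def PartialIso (P : Set α) (P' : Set β) (S : Finset ℕ) (f : ℕ → α) (f' : ℕ → β) : Prop :=
  ∀ i ∈ S, (f i ∈ P ↔ f' i ∈ P') ∧ ∀ j ∈ S, (f i = f j ↔ f' i = f' j)

namespace PartialIso

variable {S T : Finset ℕ} {f : ℕ → α} {f' : ℕ → β}

theorem symm (h : PartialIso P P' S f f') : PartialIso P' P S f' f :=
  fun i hi => ⟨(h i hi).1.symm, fun j hj => ((h i hi).2 j hj).symm⟩

theorem mono (h : PartialIso P P' S f f') (hTS : T ⊆ S) : PartialIso P P' T f f' :=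
  fun i hi => ⟨(h i (hTS hi)).1, fun j hj => (h i (hTS hi)).2 j (hTS hj)⟩

theorem insert_update {x : ℕ} {a : α} {a' : β} (h : PartialIso P P' S f f') (hx : x ∉ S)
    (hP : a ∈ P ↔ a' ∈ P') (heq : ∀ j ∈ S, f j = a ↔ f' j = a') :
    PartialIso P P' (insert x S) (update f x a) (update f' x a') := by
  have hne : ∀ j ∈ S, j ≠ x := fun j hj hjx => hx (hjx ▸ hj)
  intro i hi
  rcases Finset.mem_insert.mp hi with rfl | hiS
  · refine ⟨by simpa using hP, fun j hj => ?_⟩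
    rcases Finset.mem_insert.mp hj with rfl | hjS
    · simp
    · simp only [update_self, update_of_ne (hne j hjS)]
      exact eq_comm.trans ((heq j hjS).trans eq_comm)
  · simp only [update_of_ne (hne i hiS)]
    refine ⟨(h i hiS).1, fun j hj => ?_⟩
    rcases Finset.mem_insert.mp hj with rfl | hjS
    · simpa using heq i hiS
    · simpa [update_of_ne (hne j hjS)] using (h i hiS).2 j hjS

theorem exists_insert_update (h : PartialIso P P' S f f')
    (hP' : BothSidesAtLeast P' (S.card + 1)) (x : ℕ) (a : α) :
    ∃ a', PartialIso P P' (insert x S) (update f x a) (update f' x a') := by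
  classical
  set T := S.erase x
  have hT : PartialIso P P' T f f' := h.mono (S.erase_subset x)
  suffices ∃ a', (a ∈ P ↔ a' ∈ P') ∧ ∀ j ∈ T, f j = a ↔ f' j = a' by
    obtain ⟨a', hP, heq⟩ := this
    have hST : insert x S = insert x T := by ext; simp [T]; tauto
    exact ⟨a', hST ▸ hT.insert_update (S.notMem_erase x) hP heq⟩
  by_cases hold : ∃ i ∈ T, f i = a
  · obtain ⟨i, hi, rfl⟩ := hold
    exact ⟨f' i, (hT i hi).1, fun j hj => (hT j hj).2 i hi⟩
  push Not at hold
  have hTS : (T.card : ℕ∞) < S.card + 1 := by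
    exact_mod_cast Nat.lt_succ_of_le Finset.card_erase_le
  by_cases ha : a ∈ P
  · obtain ⟨a', ha', hne⟩ := Finset.exists_mem_forall_ne_of_card_lt_encard T f'
      (hTS.trans_le (by exact_mod_cast hP'.1))
    exact ⟨a', iff_of_true ha ha', fun j hj => iff_of_false (hold j hj) (hne j hj)⟩
  · obtain ⟨a', ha', hne⟩ := Finset.exists_mem_forall_ne_of_card_lt_encard T f'
      (hTS.trans_le (by exact_mod_cast hP'.2))
    exact ⟨a', iff_of_false ha ha', fun j hj => iff_of_false (hold j hj) (hne j hj)⟩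

end PartialIso

theorem holds_iff_of_partialIso (φ : MFml) {S : Finset ℕ} {f : ℕ → α} {f' : ℕ → β}
    (hφ : φ.freeVars ⊆ S) (h : PartialIso P P' S f f')
    (hP : BothSidesAtLeast P (S.card + φ.depth)) (hP' : BothSidesAtLeast P' (S.card + φ.depth)) :
    Holds P f φ ↔ Holds P' f' φ := by
  induction φ generalizing S f f' with
  | eq i j => exact (h i (hφ (by simp [freeVars]))).2 j (hφ (by simp [freeVars]))
  | rel _ v => exact (h (v 0) (hφ (by simp [freeVars]))).1
  | not ψ ih => exact not_congr (ih hφ h hP hP')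
  | and ψ χ ihψ ihχ =>
    simp only [freeVars, Finset.union_subset_iff, depth] at hφ hP hP'
    exact and_congr
      (ihψ hφ.1 h (hP.mono (by omega)) (hP'.mono (by omega)))
      (ihχ hφ.2 h (hP.mono (by omega)) (hP'.mono (by omega)))
  | qu q x ψ ih =>
    simp only [depth] at hP hP'
    have hψ : ψ.freeVars ⊆ insert x S := Finset.subset_insert_iff.mpr <| by
      simpa only [freeVars, Finset.sdiff_singleton_eq_erase] using hφ
    have hcard := Finset.card_insert_le x S
    have step {a a'} (hxS : PartialIso P P' (insert x S) (update f x a) (update f' x a')) :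
        Holds P (update f x a) ψ ↔ Holds P' (update f' x a') ψ :=
      ih hψ hxS (hP.mono (by omega)) (hP'.mono (by omega))
    refine foQuant_congr (fun a => ?_) (fun a' => ?_) q
    · obtain ⟨a', ha'⟩ := h.exists_insert_update (hP'.mono (by omega)) x a
      exact ⟨a', step ha'⟩
    · obtain ⟨a, ha⟩ := h.symm.exists_insert_update (hP.mono (by omega)) x a'
      exact ⟨a, step ha.symm⟩

end EhrenfeuchtFraisse

section Counting

variable {α : Type} {P : Set α} {f : ℕ → α}

def verum : MFml := .qu false 0 (.eq 0 0)

def neBefore (j : ℕ) : ℕ → MFml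
  | 0 => verum
  | i + 1 => .and (neBefore j i) (.not (.eq i j))

/-- `atLeastAfter k j` binds `v_j, …, v_{j+k-1}` in turn, each in `P` and distinct from all
earlier variables. -/
def atLeastAfter : ℕ → ℕ → MFml
  | 0, _ => verum
  | k + 1, j =>
    .qu true j (.and (.rel () fun _ => j) (.and (neBefore j j) (atLeastAfter k (j + 1))))

def atLeast (k : ℕ) : MFml := atLeastAfter k 0

def exactly (k : ℕ) : MFml := .and (atLeast k) (.not (atLeast (k + 1)))

theorem holds_verum : Holds P f verum := by
  simp [verum, Sat, FOQuant]

theorem holds_neBefore (j i : ℕ) : Holds P f (neBefore j i) ↔ f j ∉ f '' Set.Iio i := by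
  induction i with
  | zero => simpa [neBefore] using holds_verum
  | succ i ih =>
    simp only [neBefore, Sat, ih, Nat.Iio_add_one_eq_insert, Set.image_insert_eq,
      Set.mem_insert_iff, not_or, eq_comm (a := f i)]
    exact and_comm

theorem holds_atLeastAfter (k j : ℕ) (f : ℕ → α) :
    Holds P f (atLeastAfter k j) ↔ (k : ℕ∞) ≤ (P \ f '' Set.Iio j).encard := by
  induction k generalizing j f with
  | zero => simpa [atLeastAfter] using holds_verum
  | succ k ih =>
    have hfix (a : α) : update f j a '' Set.Iio j = f '' Set.Iio j :=
      Set.image_congr fun i hi => update_of_ne (ne_of_lt hi) a f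
    have hdiff (a : α) : P \ update f j a '' Set.Iio (j + 1) = (P \ f '' Set.Iio j) \ {a} := by
      rw [Nat.Iio_add_one_eq_insert, Set.image_insert_eq, update_self, hfix,
        ← Set.union_singleton, Set.sdiff_sdiff]
    simp only [atLeastAfter, Sat, FOQuant, ih, holds_neBefore, update_self, hfix, hdiff,
      Nat.cast_succ, ← Set.exists_mem_le_encard_sdiff_singleton_iff, Set.mem_sdiff, Set.Nonempty,
      Set.mem_ofPred_eq, and_assoc]

theorem holds_atLeast (k : ℕ) : Holds P f (atLeast k) ↔ (k : ℕ∞) ≤ P.encard := by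
  simp [atLeast, holds_atLeastAfter]

theorem holds_exactly (k : ℕ) : Holds P f (exactly k) ↔ P.encard = k := by
  simp only [exactly, Sat, holds_atLeast, not_le, Nat.cast_succ,
    ENat.lt_add_one_iff (ENat.natCast_ne_top k)]
  exact ⟨fun h => le_antisymm h.2 h.1, fun h => ⟨h.ge, h.le⟩⟩

theorem freeVars_verum : verum.freeVars = ∅ := by
  simp [verum, freeVars]

theorem freeVars_neBefore (j i : ℕ) : (neBefore j i).freeVars ⊆ insert j (Finset.range i) := by
  induction i with
  | zero => simp [neBefore, freeVars_verum]
  | succ i ih =>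
    intro l hl
    simp only [neBefore, freeVars, Finset.mem_union, Finset.mem_insert, Finset.mem_singleton] at hl
    have := @ih l
    simp only [Finset.mem_insert, Finset.mem_range] at this ⊢
    grind

theorem freeVars_atLeastAfter (k j : ℕ) : (atLeastAfter k j).freeVars ⊆ Finset.range j := by
  induction k generalizing j with
  | zero => simp [atLeastAfter, freeVars_verum]
  | succ k ih =>
    intro l hl
    simp only [atLeastAfter, freeVars, Finset.mem_sdiff, Finset.mem_union, Finset.mem_image,
      Finset.mem_singleton] at hl
    have h₁ := @ih (j + 1) l
    have h₂ := @freeVars_neBefore j j l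
    simp only [Finset.mem_insert, Finset.mem_range] at h₁ h₂ ⊢
    grind

theorem freeVars_exactly (k : ℕ) : (exactly k).freeVars = ∅ := by
  simp only [exactly, atLeast, freeVars, Finset.union_eq_empty]
  exact ⟨Finset.subset_empty.mp (freeVars_atLeastAfter k 0),
    Finset.subset_empty.mp (freeVars_atLeastAfter (k + 1) 0)⟩

end Counting

end MonadicFO

open MonadicFO

open Fml in
/-- Weak separability does not imply separability for infinite classes: over the
vocabulary `{P}` (one unary relation) with models `𝔄_n` on domain `ℕ` where `P`
has exactly `n` elements, the odd-indexed and even-indexed classes are weakly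
separable in first-order logic, but no single first-order sentence separates them. -/
theorem weak_not_strong_infinite (I : ℕ → Set ℕ)
    (hI : ∀ n, 1 ≤ n → (I n).Finite ∧ (I n).ncard = n) :
    (∀ m n, 1 ≤ m → 1 ≤ n → Odd m → Even n →
      ∃ φ : Fml Unit (fun _ => 1) Bool, freeVars φ = ∅ ∧
        Sat FOQuant (fun _ v => v 0 ∈ I m) (fun _ => 0) φ ∧
        ¬ Sat FOQuant (fun _ v => v 0 ∈ I n) (fun _ => 0) φ) ∧
    ¬ ∃ φ : Fml Unit (fun _ => 1) Bool, freeVars φ = ∅ ∧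
        (∀ n, 1 ≤ n → Odd n → Sat FOQuant (fun _ v => v 0 ∈ I n) (fun _ => 0) φ) ∧
        (∀ n, 1 ≤ n → Even n → ¬ Sat FOQuant (fun _ v => v 0 ∈ I n) (fun _ => 0) φ) := by
  have hcard (n : ℕ) (hn : 1 ≤ n) : (I n).encard = n := by
    rw [← (hI n hn).1.cast_ncard_eq, (hI n hn).2]
  refine ⟨fun m n hm hn hodd heven => ⟨exactly m, freeVars_exactly m,
    (holds_exactly m).mpr (hcard m hm), fun hsat => ?_⟩, ?_⟩
  · have hnm : n = m := by exact_mod_cast (hcard n hn).symm.trans ((holds_exactly m).mp hsat)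
    exact Nat.not_odd_iff_even.mpr heven (hnm ▸ hodd)
  · rintro ⟨φ, hφ, hodd, heven⟩
    set d := φ.depth
    have hlarge (n : ℕ) (hn : 1 ≤ n) (hd : d ≤ n) :
        BothSidesAtLeast (I n) ((∅ : Finset ℕ).card + d) :=
      bothSidesAtLeast_of_finite (hI n hn).1 (by simpa [(hI n hn).2] using hd)
    have hequiv := holds_iff_of_partialIso φ hφ.subset
      (f := fun _ => 0) (f' := fun _ => 0) (by simp [PartialIso])
      (hlarge (2 * d + 1) (by omega) (by omega)) (hlarge (2 * d + 2) (by omega) (by omega))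
    exact heven (2 * d + 2) (by omega) ⟨d + 1, by ring⟩
      (hequiv.mp (hodd (2 * d + 1) (by omega) (odd_two_mul_add_one d)))
end

section
/- Quantifier move soundness: With notation as above, suppose additionally that (A, P(𝔄,f)) ∈ Q for all (𝔄,f) ∈ A and (B, P(𝔅,g)) ∉ Q for all (𝔅,g) ∈ B, where Q is a generalized quantifier of width 1 and type 1, and suppose a formula φ of size ≤ s−1 separates C⁺ from C⁻. Then the formula Qx φ separates A from B and has size ≤ s. -/
/-- A `τ`-pair: a relational model together with an assignment over it. -/
structure TauPair (R : Type) (ar : R → ℕ) : Type 1 where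
  Dom : Type
  interp : (r : R) → (Fin (ar r) → Dom) → Prop
  assign : ℕ → Dom

namespace TauPair

variable {R QS : Type} {ar : R → ℕ}

/-- Satisfaction in a `τ`-pair. -/
def SatP (Qint : QS → (D : Type) → Set D → Prop) (p : TauPair R ar)
    (φ : Fml R ar QS) : Prop :=
  Fml.Sat Qint p.interp p.assign φ

/-- `φ` separates the class `𝒜` from the class `ℬ`: `φ` is true in every pair
of `𝒜` and false in every pair of `ℬ`. -/
def Separates (Qint : QS → (D : Type) → Set D → Prop) (φ : Fml R ar QS)
    (𝒜 ℬ : Set (TauPair R ar)) : Prop :=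
  (∀ p ∈ 𝒜, SatP Qint p φ) ∧ ∀ p ∈ ℬ, ¬ SatP Qint p φ

/-- The pair obtained by updating the assignment at variable `x` with value `v`. -/
def upd (p : TauPair R ar) (x : ℕ) (v : p.Dom) : TauPair R ar :=
  ⟨p.Dom, p.interp, Function.update p.assign x v⟩

/-- `C⁺`: pairs of `𝒮` extended at `x` by a point of the chosen set. -/
def Cplus (P : (p : TauPair R ar) → Set p.Dom) (x : ℕ)
    (𝒮 : Set (TauPair R ar)) : Set (TauPair R ar) :=
  {q | ∃ p ∈ 𝒮, ∃ v ∈ P p, q = p.upd x v}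

/-- `C⁻`: pairs of `𝒮` extended at `x` by a point outside the chosen set. -/
def Cminus (P : (p : TauPair R ar) → Set p.Dom) (x : ℕ)
    (𝒮 : Set (TauPair R ar)) : Set (TauPair R ar) :=
  {q | ∃ p ∈ 𝒮, ∃ v : p.Dom, v ∉ P p ∧ q = p.upd x v}

end TauPair

/-! Separation of `C⁺` from `C⁻` forces the set defined by `φ` in the variable `x` over each
pair `p` to be exactly `P p`, so `Qx φ` holds in `p` precisely when `(p.Dom, P p) ∈ Q`. -/

theorem Fml.one_le_size {R QS : Type} {ar : R → ℕ} (φ : Fml R ar QS) : 1 ≤ φ.size := by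
  induction φ with
  | and _ _ ih₁ _ => simp only [Fml.size]; omega
  | _ => simp only [Fml.size]; omega

namespace TauPair

variable {R QS : Type} {ar : R → ℕ} {Qint : QS → (D : Type) → Set D → Prop}
  {P : (p : TauPair R ar) → Set p.Dom} {x : ℕ} {φ : Fml R ar QS} {𝒮 : Set (TauPair R ar)}

theorem setOf_satP_upd_eq_of_separates (hsep : Separates Qint φ (Cplus P x 𝒮) (Cminus P x 𝒮))
    {p : TauPair R ar} (hp : p ∈ 𝒮) : {v | SatP Qint (p.upd x v) φ} = P p := by
  ext v
  refine ⟨fun hv => ?_, fun hv => hsep.1 _ ⟨p, hp, v, hv, rfl⟩⟩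
  by_contra hvP
  exact hsep.2 _ ⟨p, hp, v, hvP, rfl⟩ hv

theorem satP_qu_iff_of_separates (q : QS)
    (hsep : Separates Qint φ (Cplus P x 𝒮) (Cminus P x 𝒮)) {p : TauPair R ar} (hp : p ∈ 𝒮) :
    SatP Qint p (.qu q x φ) ↔ Qint q p.Dom (P p) := by
  rw [← setOf_satP_upd_eq_of_separates hsep hp]
  rfl

end TauPair

open Fml TauPair in
/-- Quantifier move soundness: if `(A, P(𝔄,f)) ∈ Q` on `𝒜`, `(B, P(𝔅,g)) ∉ Q`
on `ℬ`, and a formula `φ` of size ≤ s−1 separates `C⁺` from `C⁻`, then `Qx φ`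
separates `𝒜` from `ℬ` and has size ≤ s. -/
theorem quantifier_move_soundness {R QS : Type} {ar : R → ℕ}
    (Qint : QS → (D : Type) → Set D → Prop) (q : QS)
    (𝒜 ℬ : Set (TauPair R ar)) (P : (p : TauPair R ar) → Set p.Dom)
    (x : ℕ) (φ : Fml R ar QS) (s : ℕ)
    (hQA : ∀ p ∈ 𝒜, Qint q p.Dom (P p))
    (hQB : ∀ p ∈ ℬ, ¬ Qint q p.Dom (P p))
    (hsep : Separates Qint φ (Cplus P x (𝒜 ∪ ℬ)) (Cminus P x (𝒜 ∪ ℬ)))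
    (hsize : size φ ≤ s - 1) :
    Separates Qint (Fml.qu q x φ) 𝒜 ℬ ∧ size (Fml.qu q x φ) ≤ s := by
  refine ⟨⟨fun p hp => ?_, fun p hp => ?_⟩, ?_⟩
  · exact (satP_qu_iff_of_separates q hsep (Or.inl hp)).2 (hQA p hp)
  · exact mt (satP_qu_iff_of_separates q hsep (Or.inr hp)).1 (hQB p hp)
  · have := φ.one_le_size
    simp only [size]
    omega
end
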